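/- For every z > 0 and every n ∈ ℕ, the n-th moment of the generalized inverse Gaussian distribution with parameters (1, z², 1/2) satisfies ∫_0^∞ xⁿ g₊(x; z) dx = (1/2ⁿ) · ((2n)!/n!) · q_n(z). -/

import Mathlib

/-- The generalized inverse Gaussian density with parameters `(ψ, χ, λ) = (1, z², +1/2)`:
`g₊(x; z) = (e^z / √(2π)) x^{-1/2} exp(-z²/(2x) - x/2)`. -/
noncomputable def gigPlus (z x : ℝ) : ℝ :=
  Real.exp z / Real.sqrt (2 * Real.pi) * x ^ (-(1 : ℝ) / 2) *
    Real.exp (-z ^ 2 / (2 * x) - x / 2)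

/-- The Bessel polynomial `q_n(z) = ∑_{l=0}^n [C(n,l)/C(2n,l)] (2z)^l / l!`. -/
noncomputable def besselQ (n : ℕ) (z : ℝ) : ℝ :=
  ∑ l ∈ Finset.range (n + 1),
    ((n.choose l : ℝ) / ((2 * n).choose l : ℝ)) * (2 * z) ^ l / (Nat.factorial l : ℝ)

/-!
Write `J(ν) = ∫₀^∞ x^ν e^{-a/x - b x} dx` for `a, b > 0`. Integrating the derivative of
`x^ν e^{-a/x - b x}` over `(0, ∞)` gives `b J(ν) = ν J(ν-1) + a J(ν-2)`, and the substitution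
`x ↦ (a/b)/x` gives `J(ν) = (a/b)^{ν+1} J(-ν-2)`. For `a = z²/2`, `b = 1/2` the substitution
`x = t²` turns `J(-1/2)` into `2 e^{-z} ∫₀^∞ e^{-(t - z/t)²/2} dt`, and the Cauchy–Schlömilch
identity `∫₀^∞ f(t - c/t) dt = ½ ∫ f` (for even `f`) makes this `√(2π) e^{-z}`; reflection then
gives `J(-3/2) = J(-1/2)/z`. The recurrence `J(n+3/2) = (2n+3) J(n+1/2) + z² J(n-1/2)` is that of
the reverse Bessel polynomials `θ_n(z) = ∑_k (n+k)!/((n-k)! k! 2^k) z^{n-k}`, so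
`J(n-1/2) = √(2π) e^{-z} θ_n(z)`, and `θ_n = 2^{-n} (2n)!/n! · q_n`.
-/

open Real MeasureTheory Set Filter Topology Nat

lemma hasDerivAt_const_div {c x : ℝ} (hx : x ≠ 0) :
    HasDerivAt (fun y => c / y) (-(c / x ^ 2)) x :=
  ((hasDerivAt_const x c).fun_div (hasDerivAt_id' x) hx).congr_deriv (by ring)

lemma integral_comp_const_div_Ioi (g : ℝ → ℝ) {c : ℝ} (hc : 0 < c) :
    ∫ x in Ioi 0, c / x ^ 2 * g (c / x) = ∫ x in Ioi 0, g x := by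
  have himage : (fun x => c / x) '' Ioi 0 = Ioi 0 := by
    ext y
    refine ⟨?_, fun (hy : 0 < y) => ⟨c / y, div_pos hc hy, by field_simp⟩⟩
    rintro ⟨x, hx : 0 < x, rfl⟩
    exact div_pos hc hx
  have hinj : InjOn (fun x => c / x) (Ioi 0) := fun x _ y _ h => by
    simpa [div_eq_mul_inv, hc.ne'] using h
  have h := integral_image_eq_integral_abs_deriv_smul measurableSet_Ioi
    (fun x (hx : 0 < x) => (hasDerivAt_const_div hx.ne').hasDerivWithinAt) hinj g
  rw [himage] at h
  rw [h]
  refine setIntegral_congr_fun measurableSet_Ioi fun x (hx : 0 < x) => ?_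
  rw [abs_neg, abs_of_pos (by positivity), smul_eq_mul]

section SubConstDiv

variable {c : ℝ}

lemma hasDerivAt_sub_const_div {t : ℝ} (ht : t ≠ 0) :
    HasDerivAt (fun t => t - c / t) (1 + c / t ^ 2) t :=
  ((hasDerivAt_id' t).fun_sub (hasDerivAt_const_div ht)).congr_deriv (by ring)

lemma strictMonoOn_sub_const_div (hc : 0 < c) : StrictMonoOn (fun t => t - c / t) (Ioi 0) :=
  fun s (hs : 0 < s) t _ hst => by
    have := div_lt_div_of_pos_left hc hs hst
    dsimp only
    linarith

lemma image_sub_const_div_Ioi (hc : 0 < c) : (fun t => t - c / t) '' Ioi 0 = univ := by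
  refine eq_univ_of_forall fun y => ?_
  have hroot : 0 ≤ y ^ 2 + 4 * c := by positivity
  have hsqrt : |y| < √(y ^ 2 + 4 * c) := by
    rw [← sqrt_sq_eq_abs]
    exact sqrt_lt_sqrt (sq_nonneg y) (by linarith)
  have ht : 0 < y + √(y ^ 2 + 4 * c) := by linarith [neg_abs_le y]
  refine ⟨(y + √(y ^ 2 + 4 * c)) / 2, half_pos ht, ?_⟩
  field_simp
  linear_combination sq_sqrt hroot

lemma integral_eq_integral_Ioi_comp_sub_const_div (f : ℝ → ℝ) (hc : 0 < c) :
    ∫ u, f u = ∫ t in Ioi 0, (1 + c / t ^ 2) * f (t - c / t) := by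
  rw [← setIntegral_univ, ← image_sub_const_div_Ioi hc,
    integral_image_eq_integral_abs_deriv_smul measurableSet_Ioi
      (fun t (ht : 0 < t) => (hasDerivAt_sub_const_div ht.ne').hasDerivWithinAt)
      (strictMonoOn_sub_const_div hc).injOn]
  refine setIntegral_congr_fun measurableSet_Ioi fun t (ht : 0 < t) => ?_
  rw [abs_of_pos (by positivity), smul_eq_mul]

lemma integrableOn_deriv_mul_comp_sub_const_div {f : ℝ → ℝ} (hc : 0 < c) (hf : Integrable f) :
    IntegrableOn (fun t => (1 + c / t ^ 2) * f (t - c / t)) (Ioi 0) := by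
  refine ((integrableOn_image_iff_integrableOn_abs_deriv_smul measurableSet_Ioi
    (fun t (ht : 0 < t) => (hasDerivAt_sub_const_div ht.ne').hasDerivWithinAt)
    (strictMonoOn_sub_const_div hc).injOn f).mp ?_).congr_fun (fun t (ht : 0 < t) => ?_)
    measurableSet_Ioi
  · rw [image_sub_const_div_Ioi hc]
    exact hf.integrableOn
  · simp only [smul_eq_mul, abs_of_pos (show 0 < 1 + c / t ^ 2 by positivity)]

lemma integrableOn_comp_sub_const_div {f : ℝ → ℝ} (hc : 0 < c) (hf : Integrable f) :
    IntegrableOn (fun t => f (t - c / t)) (Ioi 0) := by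
  have hbdd : IntegrableOn (fun t => t ^ 2 / (t ^ 2 + c) * ((1 + c / t ^ 2) * f (t - c / t)))
      (Ioi 0) :=
    (integrableOn_deriv_mul_comp_sub_const_div hc hf).bdd_mul (c := 1)
      ((continuous_id.pow 2).div (by fun_prop) fun t => by positivity).aestronglyMeasurable
      (ae_of_all _ fun t => by
        rw [norm_of_nonneg (by positivity), div_le_one (by positivity)]
        linarith)
  refine hbdd.congr_fun (fun t (ht : 0 < t) => ?_) measurableSet_Ioi
  field_simp

lemma integral_comp_sub_const_div_Ioi_of_even {f : ℝ → ℝ} (hc : 0 < c) (hf : Integrable f)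
    (heven : ∀ u, f (-u) = f u) :
    ∫ t in Ioi 0, f (t - c / t) = (∫ u, f u) / 2 := by
  have hflip : ∫ t in Ioi 0, c / t ^ 2 * f (t - c / t) = ∫ t in Ioi 0, f (t - c / t) := by
    conv_rhs => rw [← integral_comp_const_div_Ioi _ hc]
    refine setIntegral_congr_fun measurableSet_Ioi fun t (ht : 0 < t) => ?_
    rw [show c / t - c / (c / t) = -(t - c / t) by field_simp; ring, heven]
  have hsplit : ∫ t in Ioi 0, c / t ^ 2 * f (t - c / t) =
      (∫ t in Ioi 0, (1 + c / t ^ 2) * f (t - c / t)) - ∫ t in Ioi 0, f (t - c / t) := by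
    rw [← integral_sub (integrableOn_deriv_mul_comp_sub_const_div hc hf)
      (integrableOn_comp_sub_const_div hc hf)]
    congr 1 with t
    ring
  linarith [integral_eq_integral_Ioi_comp_sub_const_div f hc]

end SubConstDiv

lemma integral_Ioi_of_hasDerivAt_of_tendsto_nhdsGT {f f' : ℝ → ℝ} {a m₀ m : ℝ}
    (hderiv : ∀ x ∈ Ioi a, HasDerivAt f (f' x) x) (hint : IntegrableOn f' (Ioi a))
    (h₀ : Tendsto f (𝓝[>] a) (𝓝 m₀)) (htop : Tendsto f atTop (𝓝 m)) :
    ∫ x in Ioi a, f' x = m - m₀ := by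
  simpa using integral_Ioi_deriv_mul_eq_sub (v := fun _ => 1) (v' := fun _ => 0) hderiv
    (fun x _ => hasDerivAt_const x 1) (by simpa [Pi.mul_def, Pi.add_def] using hint)
    (by simpa [Pi.mul_def] using h₀) (by simpa [Pi.mul_def] using htop)

noncomputable def gigKernel (a b ν x : ℝ) : ℝ := x ^ ν * exp (-a / x - b * x)

noncomputable def gigIntegral (a b ν : ℝ) : ℝ := ∫ x in Ioi 0, gigKernel a b ν x

section GigKernel

variable {a b : ℝ}

lemma continuousOn_gigKernel (ν : ℝ) : ContinuousOn (gigKernel a b ν) (Ioi 0) := fun x hx =>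
  ((continuousAt_rpow_const x ν (Or.inl (ne_of_gt hx))).mul
    (by fun_prop (disch := exact ne_of_gt hx))).continuousWithinAt

lemma tendsto_gigKernel_nhdsGT_zero (ha : 0 < a) (ν : ℝ) :
    Tendsto (gigKernel a b ν) (𝓝[>] 0) (𝓝 0) := by
  have hinv : Tendsto (fun x : ℝ => x⁻¹ ^ (-ν) * exp (-a * x⁻¹)) (𝓝[>] 0) (𝓝 0) :=
    (tendsto_rpow_mul_exp_neg_mul_atTop_nhds_zero _ _ ha).comp tendsto_inv_nhdsGT_zero
  have hlin : Tendsto (fun x : ℝ => exp (-b * x)) (𝓝[>] 0) (𝓝 1) := by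
    have hcont : Continuous fun x : ℝ => exp (-b * x) := by fun_prop
    simpa using (hcont.tendsto 0).mono_left nhdsWithin_le_nhds
  have hprod := hinv.mul hlin
  rw [zero_mul] at hprod
  refine hprod.congr' ?_
  filter_upwards [self_mem_nhdsWithin] with x (hx : 0 < x)
  rw [gigKernel, inv_rpow hx.le, ← rpow_neg hx.le, neg_neg, mul_assoc, ← exp_add]
  ring_nf

lemma tendsto_gigKernel_atTop (ha : 0 ≤ a) (hb : 0 < b) (ν : ℝ) :
    Tendsto (gigKernel a b ν) atTop (𝓝 0) := by
  refine squeeze_zero' ?_ ?_ (tendsto_rpow_mul_exp_neg_mul_atTop_nhds_zero ν b hb)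
  · filter_upwards [eventually_gt_atTop 0] with x hx
    unfold gigKernel
    positivity
  · filter_upwards [eventually_gt_atTop 0] with x hx
    unfold gigKernel
    gcongr
    have : 0 ≤ a / x := by positivity
    linarith [neg_div x a]

lemma gigKernel_le (ha : 0 < a) (ν : ℝ) (m : ℕ) {x : ℝ} (hx : 0 < x) :
    gigKernel a b ν x ≤ m ! / a ^ m * (x ^ (ν + m) * exp (-b * x)) := by
  have hexp : exp (-(a / x)) ≤ m ! / a ^ m * x ^ m := by
    have hpos : 0 < (a / x) ^ m / m ! := by positivity
    calc exp (-(a / x)) = (exp (a / x))⁻¹ := exp_neg _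
      _ ≤ ((a / x) ^ m / m !)⁻¹ :=
        inv_anti₀ hpos (Real.pow_div_factorial_le_exp _ (by positivity) m)
      _ = m ! / a ^ m * x ^ m := by rw [div_pow]; field_simp
  calc gigKernel a b ν x = x ^ ν * exp (-(a / x)) * exp (-b * x) := by
        rw [gigKernel, mul_assoc, ← exp_add]; ring_nf
    _ ≤ x ^ ν * (m ! / a ^ m * x ^ m) * exp (-b * x) := by gcongr
    _ = m ! / a ^ m * (x ^ (ν + m) * exp (-b * x)) := by rw [rpow_add hx, rpow_natCast]; ring

lemma integrableOn_gigKernel (ha : 0 < a) (hb : 0 < b) (ν : ℝ) :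
    IntegrableOn (gigKernel a b ν) (Ioi 0) := by
  obtain ⟨m, hm⟩ := exists_nat_gt (-1 - ν)
  have hdom := (integrableOn_rpow_mul_exp_neg_mul_rpow (show -1 < ν + m by linarith) one_pos
    hb).const_mul (m ! / a ^ m)
  refine hdom.mono' ((continuousOn_gigKernel ν).aestronglyMeasurable measurableSet_Ioi) ?_
  filter_upwards [ae_restrict_mem measurableSet_Ioi] with x (hx : 0 < x)
  rw [norm_of_nonneg (by unfold gigKernel; positivity), rpow_one]
  exact gigKernel_le ha ν m hx

lemma hasDerivAt_gigKernel (ν : ℝ) {x : ℝ} (hx : 0 < x) :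
    HasDerivAt (gigKernel a b ν)
      (ν * gigKernel a b (ν - 1) x + a * gigKernel a b (ν - 2) x - b * gigKernel a b ν x)
      x := by
  have harg : HasDerivAt (fun x => -a / x - b * x) (a / x ^ 2 - b) x :=
    ((hasDerivAt_const_div hx.ne').fun_sub ((hasDerivAt_id' x).const_mul b)).congr_deriv
      (by ring)
  refine ((hasDerivAt_rpow_const (p := ν) (Or.inl hx.ne')).fun_mul harg.exp).congr_deriv ?_
  simp only [gigKernel, rpow_sub hx, rpow_one, rpow_two]
  field_simp
  ring

lemma gigIntegral_recurrence (ha : 0 < a) (hb : 0 < b) (ν : ℝ) :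
    b * gigIntegral a b ν = ν * gigIntegral a b (ν - 1) + a * gigIntegral a b (ν - 2) := by
  have hint (μ c : ℝ) : IntegrableOn (fun x => c * gigKernel a b μ x) (Ioi 0) :=
    (integrableOn_gigKernel ha hb μ).const_mul c
  have hint₂ : IntegrableOn
      (fun x => ν * gigKernel a b (ν - 1) x + a * gigKernel a b (ν - 2) x) (Ioi 0) :=
    (hint _ ν).add (hint _ a)
  have hftc := integral_Ioi_of_hasDerivAt_of_tendsto_nhdsGT
    (fun x hx => hasDerivAt_gigKernel ν hx) (hint₂.sub (hint _ b))
    (tendsto_gigKernel_nhdsGT_zero ha ν) (tendsto_gigKernel_atTop ha.le hb ν)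
  rw [integral_sub hint₂ (hint _ b), integral_add (hint _ ν) (hint _ a),
    integral_const_mul, integral_const_mul, integral_const_mul] at hftc
  simp only [gigIntegral]
  linarith

lemma gigIntegral_eq_mul_gigIntegral_neg_sub_two (ha : 0 < a) (hb : 0 < b) (ν : ℝ) :
    gigIntegral a b ν = (a / b) ^ (ν + 1) * gigIntegral a b (-ν - 2) := by
  have hc : 0 < a / b := div_pos ha hb
  rw [gigIntegral, ← integral_comp_const_div_Ioi _ hc, gigIntegral, ← integral_const_mul]
  refine setIntegral_congr_fun measurableSet_Ioi fun x (hx : 0 < x) => ?_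
  have hexp : -a / (a / b / x) - b * (a / b / x) = -a / x - b * x := by field_simp; ring
  rw [gigKernel, gigKernel, hexp, div_rpow hc.le hx.le, rpow_add_one hc.ne', rpow_sub hx,
    rpow_neg hx.le, rpow_two]
  field_simp

end GigKernel

lemma gigIntegral_neg_half {z : ℝ} (hz : 0 < z) :
    gigIntegral (z ^ 2 / 2) (1 / 2) (-1 / 2) = √(2 * π) * exp (-z) := by
  have hgauss : ∫ t in Ioi 0, exp (-(1 / 2) * (t - z / t) ^ 2) = √(2 * π) / 2 := by
    rw [integral_comp_sub_const_div_Ioi_of_even hz (integrable_exp_neg_mul_sq (by norm_num))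
      (fun u => by rw [neg_sq]), integral_gaussian, show π / (1 / 2) = 2 * π by ring]
  rw [gigIntegral, ← integral_comp_rpow_Ioi_of_pos (p := 2) two_pos]
  calc _ = ∫ t in Ioi 0, 2 * exp (-z) * exp (-(1 / 2) * (t - z / t) ^ 2) := by
        refine setIntegral_congr_fun measurableSet_Ioi fun t (ht : 0 < t) => ?_
        have hsq : (t ^ (2 : ℝ)) ^ (-1 / 2 : ℝ) = t⁻¹ := by
          rw [← rpow_mul ht.le]; norm_num [rpow_neg_one]
        rw [smul_eq_mul, gigKernel, hsq, rpow_two, show (2 : ℝ) - 1 = 1 by norm_num, rpow_one,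
          mul_assoc 2 (exp _), ← exp_add]
        field_simp
        congr 1
        field_simp
        ring
    _ = √(2 * π) * exp (-z) := by rw [integral_const_mul, hgauss]; ring

lemma gigIntegral_neg_three_halves {z : ℝ} (hz : 0 < z) :
    gigIntegral (z ^ 2 / 2) (1 / 2) (-3 / 2) = √(2 * π) * exp (-z) / z := by
  rw [gigIntegral_eq_mul_gigIntegral_neg_sub_two (by positivity) (by norm_num),
    show -(-3 / 2 : ℝ) - 2 = -1 / 2 by norm_num, gigIntegral_neg_half hz,
    show z ^ 2 / 2 / (1 / 2) = z ^ 2 by ring, ← rpow_natCast, ← rpow_mul hz.le]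
  norm_num [rpow_neg_one]
  ring

section ReverseBessel

open Finset

noncomputable def besselCoeff (j k : ℕ) : ℝ := (2 * k + j)! / (j ! * k ! * 2 ^ k)

lemma besselCoeff_zero_right (j : ℕ) : besselCoeff j 0 = 1 := by
  simp [besselCoeff, (Nat.factorial_pos j).ne']

lemma besselCoeff_succ_right {j : ℕ} (hj : j < 2) (k : ℕ) :
    besselCoeff j (k + 1) = (2 * (j + k) + 1) * besselCoeff j k := by
  interval_cases j <;>
  · simp only [besselCoeff, show ∀ m, 2 * (k + 1) + m = 2 * k + m + 1 + 1 by omega,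
      Nat.factorial_succ, pow_succ, add_zero]
    push_cast
    field_simp
    ring

lemma besselCoeff_succ_succ (j k : ℕ) :
    besselCoeff (j + 2) (k + 1) =
      (2 * (j + k) + 5) * besselCoeff (j + 2) k + besselCoeff j (k + 1) := by
  simp only [besselCoeff, show 2 * (k + 1) + (j + 2) = 2 * k + j + 1 + 1 + 1 + 1 by omega,
    show 2 * k + (j + 2) = 2 * k + j + 1 + 1 by omega,
    show 2 * (k + 1) + j = 2 * k + j + 1 + 1 by omega, Nat.factorial_succ, pow_succ]
  push_cast
  field_simp
  ring

noncomputable def reverseBessel (n : ℕ) (z : ℝ) : ℝ :=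
  ∑ j ∈ range (n + 1), besselCoeff j (n - j) * z ^ j

lemma reverseBessel_zero (z : ℝ) : reverseBessel 0 z = 1 := by
  simp [reverseBessel, besselCoeff_zero_right]

lemma reverseBessel_one (z : ℝ) : reverseBessel 1 z = 1 + z := by
  simp [reverseBessel, sum_range_succ, besselCoeff_zero_right,
    besselCoeff_succ_right (show 0 < 2 by norm_num)]

lemma reverseBessel_add_two (n : ℕ) (z : ℝ) :
    reverseBessel (n + 2) z =
      (2 * n + 3) * reverseBessel (n + 1) z + z ^ 2 * reverseBessel n z := by
  -- Split off the coefficients of `1`, `z`, `z^(n+2)`; the rest match by `besselCoeff_succ_succ`.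
  have hL : reverseBessel (n + 2) z = ∑ j ∈ range n, besselCoeff (j + 2) (n - j) * z ^ (j + 2) +
      besselCoeff (n + 2) 0 * z ^ (n + 2) + besselCoeff 1 (n + 1) * z + besselCoeff 0 (n + 2) := by
    rw [reverseBessel, sum_range_succ', sum_range_succ', sum_range_succ]
    simp
  have hM : reverseBessel (n + 1) z =
      ∑ j ∈ range n, besselCoeff (j + 2) (n - (j + 1)) * z ^ (j + 2) + besselCoeff 1 n * z +
        besselCoeff 0 (n + 1) := by
    rw [reverseBessel, sum_range_succ', sum_range_succ']
    simp
  have hR : z ^ 2 * reverseBessel n z = ∑ j ∈ range n, besselCoeff j (n - j) * z ^ (j + 2) +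
      besselCoeff n 0 * z ^ (n + 2) := by
    rw [reverseBessel, sum_range_succ, mul_add, mul_sum]
    simp only [Nat.sub_self]
    congr 1
    · exact sum_congr rfl fun j _ => by ring
    · ring
  have hsum : ∑ j ∈ range n, besselCoeff (j + 2) (n - j) * z ^ (j + 2) =
      (2 * n + 3) * ∑ j ∈ range n, besselCoeff (j + 2) (n - (j + 1)) * z ^ (j + 2) +
        ∑ j ∈ range n, besselCoeff j (n - j) * z ^ (j + 2) := by
    rw [mul_sum, ← sum_add_distrib]
    refine sum_congr rfl fun j hj => ?_
    obtain ⟨k, rfl⟩ : ∃ k, n = j + k + 1 := ⟨n - (j + 1), by grind⟩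
    rw [show j + k + 1 - j = k + 1 by omega, show j + k + 1 - (j + 1) = k by omega,
      besselCoeff_succ_succ]
    push_cast
    ring
  rw [hL, hM, hR, hsum, besselCoeff_succ_right (show 0 < 2 by norm_num),
    besselCoeff_succ_right (show 1 < 2 by norm_num), besselCoeff_zero_right, besselCoeff_zero_right]
  push_cast
  ring

lemma reverseBessel_eq_besselQ (n : ℕ) (z : ℝ) :
    reverseBessel n z = 1 / 2 ^ n * ((2 * n)! / n !) * besselQ n z := by
  rw [reverseBessel, besselQ, mul_sum]
  refine sum_congr rfl fun l hl => ?_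
  obtain ⟨k, rfl⟩ : ∃ k, n = l + k := ⟨n - l, by grind⟩
  rw [Nat.cast_choose ℝ (by omega : l ≤ l + k),
    Nat.cast_choose ℝ (by omega : l ≤ 2 * (l + k)),
    show l + k - l = k by omega, show 2 * (l + k) - l = 2 * k + l by omega, besselCoeff]
  field_simp
  ring

end ReverseBessel

lemma gigIntegral_nat_sub_half {z : ℝ} (hz : 0 < z) (n : ℕ) :
    gigIntegral (z ^ 2 / 2) (1 / 2) (n - 1 / 2) = √(2 * π) * exp (-z) * reverseBessel n z := by
  have hrec := gigIntegral_recurrence (a := z ^ 2 / 2) (b := 1 / 2) (by positivity) (by norm_num)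
  induction n using Nat.twoStepInduction with
  | zero =>
    rw [reverseBessel_zero, Nat.cast_zero, zero_sub, ← neg_div, gigIntegral_neg_half hz, mul_one]
  | one =>
    have h := hrec (1 / 2)
    rw [show (1 / 2 : ℝ) - 1 = -1 / 2 by norm_num, show (1 / 2 : ℝ) - 2 = -3 / 2 by norm_num,
      gigIntegral_neg_half hz, gigIntegral_neg_three_halves hz] at h
    rw [Nat.cast_one, show (1 : ℝ) - 1 / 2 = 1 / 2 by norm_num, reverseBessel_one]
    field_simp at h ⊢
    linear_combination h
  | more n ih₂ ih₁ =>
    have h := hrec (n + 2 - 1 / 2)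
    rw [show (n : ℝ) + 2 - 1 / 2 - 1 = ((n + 1 : ℕ) : ℝ) - 1 / 2 by push_cast; ring,
      show (n : ℝ) + 2 - 1 / 2 - 2 = n - 1 / 2 by ring, ih₁, ih₂] at h
    rw [Nat.cast_add, Nat.cast_two, reverseBessel_add_two]
    linear_combination 2 * h

theorem stmt_5 (z : ℝ) (hz : 0 < z) (n : ℕ) :
    ∫ x in Set.Ioi (0 : ℝ), x ^ n * gigPlus z x =
      (1 / 2 ^ n) * ((Nat.factorial (2 * n) : ℝ) / (Nat.factorial n : ℝ)) * besselQ n z := by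
  have hkernel (x : ℝ) (hx : x ∈ Ioi 0) : x ^ n * gigPlus z x =
      exp z / √(2 * π) * gigKernel (z ^ 2 / 2) (1 / 2) (n - 1 / 2) x := by
    rw [gigPlus, gigKernel, rpow_sub hx, rpow_natCast, neg_div, rpow_neg (le_of_lt hx),
      show -z ^ 2 / (2 * x) - x / 2 = -(z ^ 2 / 2) / x - 1 / 2 * x by ring]
    ring
  rw [setIntegral_congr_fun measurableSet_Ioi hkernel, integral_const_mul, ← gigIntegral,
    gigIntegral_nat_sub_half hz, ← reverseBessel_eq_besselQ, exp_neg]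
  field_simp
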